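/- Let C ∈ ℝ^{n₁×n₂×n₃} and D ∈ ℝ^{n₁×l×n₃}. If X̃ ∈ ℝ^{n₂×l×n₃} satisfies the normal equation Cᵀ⋆C⋆X̃ = Cᵀ⋆D and is of the form X̃ = Cᵀ⋆C⋆Y for some Y ∈ ℝ^{n₂×l×n₃}, then X̃ is the minimal Frobenius norm least-squares solution: ‖X̃‖ ≤ ‖X‖ for every X with Cᵀ⋆C⋆X = Cᵀ⋆D, with equality if and only if X = X̃. -/
import Mathlib


open Matrix Filter Topology

noncomputable section

/-- A third-order real tensor of size `n₁ × n₂ × n₃`, identified with the family of its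
frontal slices indexed by `ZMod n₃`. -/
abbrev Tensor (n₁ n₂ n₃ : ℕ) := ZMod n₃ → Matrix (Fin n₁) (Fin n₂) ℝ

/-- The T-product of third-order tensors: `(C ⋆ D)(k) = ∑ j, C (k - j) * D j`. -/
def tProd {n₁ n₂ l n₃ : ℕ} [NeZero n₃] (C : Tensor n₁ n₂ n₃) (D : Tensor n₂ l n₃) :
    Tensor n₁ l n₃ :=
  fun k => ∑ j : ZMod n₃, C (k - j) * D j

/-- The tensor transpose: `(Cᵀ)(k) = (C (-k))ᵀ`. -/
def tTrans {n₁ n₂ n₃ : ℕ} (C : Tensor n₁ n₂ n₃) : Tensor n₂ n₁ n₃ :=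
  fun k => (C (-k))ᵀ

/-- The matrix trace of the first frontal slice of a tensor with square slices. -/
def trFirst {m n₃ : ℕ} (S : Tensor m m n₃) : ℝ :=
  (S 0).trace

/-- The inner product `⟨C, D⟩ = ∑ k i j, C k i j * D k i j`. -/
def tInner {n₁ n₂ n₃ : ℕ} [NeZero n₃] (C D : Tensor n₁ n₂ n₃) : ℝ :=
  ∑ k : ZMod n₃, ∑ i : Fin n₁, ∑ j : Fin n₂, C k i j * D k i j

/-- The Frobenius norm `‖C‖ = √⟨C, C⟩`. -/
def tNorm {n₁ n₂ n₃ : ℕ} [NeZero n₃] (C : Tensor n₁ n₂ n₃) : ℝ :=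
  Real.sqrt (tInner C C)

/-- The block circulant matrix of a tensor: its `(k, l)` block is `C (k - l)`. -/
def bCirc {n n₃ : ℕ} [NeZero n₃] (C : Tensor n n n₃) :
    Matrix (ZMod n₃ × Fin n) (ZMod n₃ × Fin n) ℝ :=
  fun p q => C (p.1 - q.1) p.2 q.2

/-- `C` is T-symmetric positive definite: `Cᵀ = C` and `bCirc C` is positive definite. -/
def TSymPD {n n₃ : ℕ} [NeZero n₃] (C : Tensor n n n₃) : Prop :=
  tTrans C = C ∧ (bCirc C).PosDef

section Aux
variable {n₁ n₂ l n₃ : ℕ} [NeZero n₃]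

lemma tInner_eq_trace (C D : Tensor n₁ n₂ n₃) :
    tInner C D = ∑ k : ZMod n₃, ((C k)ᵀ * D k).trace := by
  simp only [tInner, Matrix.trace, Matrix.diag, Matrix.mul_apply, Matrix.transpose_apply]
  rw [Finset.sum_congr rfl]
  intro k _
  rw [Finset.sum_comm]

lemma tInner_tProd (C : Tensor n₁ n₂ n₃) (Z : Tensor n₂ l n₃) (W : Tensor n₁ l n₃) :
    tInner (tProd C Z) W = tInner Z (tProd (tTrans C) W) := by
  simp only [tInner_eq_trace, tProd, tTrans, Matrix.transpose_sum, Matrix.transpose_mul,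
    Matrix.sum_mul, Matrix.mul_sum, Matrix.trace_sum, Matrix.mul_assoc, neg_sub]
  rw [Finset.sum_comm]

omit [NeZero n₃] in
lemma tTrans_tTrans (C : Tensor n₁ n₂ n₃) : tTrans (tTrans C) = C := by
  funext k; simp [tTrans]

lemma tProd_sub (C : Tensor n₁ n₂ n₃) (X Y : Tensor n₂ l n₃) :
    tProd C (X - Y) = tProd C X - tProd C Y := by
  funext k
  simp [tProd, Matrix.mul_sub, Finset.sum_sub_distrib]

lemma tInner_add_right (C D E : Tensor n₁ n₂ n₃) :
    tInner C (D + E) = tInner C D + tInner C E := by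
  simp [tInner, mul_add, Finset.sum_add_distrib]

lemma tInner_comm (C D : Tensor n₁ n₂ n₃) : tInner C D = tInner D C := by
  simp [tInner, mul_comm]

lemma tInner_zero_right (C : Tensor n₁ n₂ n₃) : tInner C 0 = 0 := by
  simp [tInner]

lemma tInner_self_nonneg (C : Tensor n₁ n₂ n₃) : 0 ≤ tInner C C := by
  refine Finset.sum_nonneg fun k _ => Finset.sum_nonneg fun i _ =>
    Finset.sum_nonneg fun j _ => mul_self_nonneg _

lemma tInner_self_eq_zero {C : Tensor n₁ n₂ n₃} (h : tInner C C = 0) : C = 0 := by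
  funext k
  ext i j
  have h1 : ∀ k ∈ Finset.univ (α := ZMod n₃),
      (0:ℝ) ≤ ∑ i : Fin n₁, ∑ j : Fin n₂, C k i j * C k i j := fun k _ =>
    Finset.sum_nonneg fun i _ => Finset.sum_nonneg fun j _ => mul_self_nonneg _
  have h2 := (Finset.sum_eq_zero_iff_of_nonneg h1).mp h k (Finset.mem_univ k)
  have h3 : ∀ i ∈ Finset.univ (α := Fin n₁),
      (0:ℝ) ≤ ∑ j : Fin n₂, C k i j * C k i j := fun i _ =>
    Finset.sum_nonneg fun j _ => mul_self_nonneg _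
  have h4 := (Finset.sum_eq_zero_iff_of_nonneg h3).mp h2 i (Finset.mem_univ i)
  have h5 := (Finset.sum_eq_zero_iff_of_nonneg (fun j _ => mul_self_nonneg (C k i j))).mp
    h4 j (Finset.mem_univ j)
  have := mul_self_eq_zero.mp h5
  simpa using this

end Aux

theorem stmt_18 (n₁ n₂ l n₃ : ℕ) [NeZero n₃] (C : Tensor n₁ n₂ n₃)
    (D : Tensor n₁ l n₃) (Xt : Tensor n₂ l n₃)
    (hXt : tProd (tTrans C) (tProd C Xt) = tProd (tTrans C) D)
    (Y : Tensor n₂ l n₃) (hform : Xt = tProd (tTrans C) (tProd C Y)) :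
    ∀ X : Tensor n₂ l n₃, tProd (tTrans C) (tProd C X) = tProd (tTrans C) D →
      tNorm Xt ≤ tNorm X ∧ (tNorm Xt = tNorm X ↔ X = Xt) := by
  intro X hX
  set E : Tensor n₂ l n₃ := X - Xt with hE
  have hE0 : tProd (tTrans C) (tProd C E) = 0 := by
    rw [hE, tProd_sub, tProd_sub, hX, hXt, sub_self]
  have horth : tInner Xt E = 0 := by
    rw [hform, tInner_tProd, tTrans_tTrans, tInner_tProd, hE0, tInner_zero_right]
  have hXdecomp : X = Xt + E := by rw [hE]; abel
  have hsplit : tInner X X = tInner Xt Xt + tInner E E := by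
    rw [hXdecomp, tInner_add_right, tInner_comm (Xt + E) Xt, tInner_comm (Xt + E) E,
      tInner_add_right, tInner_add_right, tInner_comm E Xt, horth]
    ring
  have hle : tInner Xt Xt ≤ tInner X X := by
    rw [hsplit]; linarith [tInner_self_nonneg E]
  refine ⟨Real.sqrt_le_sqrt hle, ?_⟩
  unfold tNorm
  rw [Real.sqrt_inj (tInner_self_nonneg Xt) (tInner_self_nonneg X)]
  constructor
  · intro h
    have hEE : tInner E E = 0 := by linarith [hsplit, h.symm]
    have := tInner_self_eq_zero hEE
    rw [hE] at this
    exact sub_eq_zero.mp this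
  · intro h
    rw [h]
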